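/- Let A_ZF be Hermitian positive definite with largest and smallest eigenvalues λ_max, λ_min, let ρ > 0, and suppose Ψ^H Ψ = I and Σ² is diagonal with eigenvalues equal to the eigenvalues of A_ZF (blockwise, so λ_max(Σ^{-2}) = 1/λ_min and λ_min(Σ^{-2}) = 1/λ_max). Then cond(Ψ^H Ψ + ρ^{-1} Σ^{-2}) = cond(A_ZF) / cond(A_ZF + ρ^{-1} I), where cond(A_ZF + ρ^{-1} I) = (λ_max + ρ^{-1})/(λ_min + ρ^{-1}). -/

import Mathlib

open Matrix
open scoped ComplexOrder

/-! Both `Ψᴴ Ψ + ρ⁻¹ Σ⁻² = 1 + ρ⁻¹ Σ⁻²` and `A + ρ⁻¹ I` have the form `d + c • B` with `c > 0` and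
`B` Hermitian, so their spectra are the increasing affine images of those of `Σ⁻²` and `A`, and
their extreme eigenvalues are the images of the extreme eigenvalues. The identity is then
rational-function algebra, using `0 < λmin ≤ λmax`. -/

noncomputable def condNum {n : Type*} [Fintype n] [DecidableEq n]
    {A : Matrix n n ℂ} (hA : A.IsHermitian) : ℝ :=
  (⨆ i, hA.eigenvalues i) / (⨅ i, hA.eigenvalues i)

open Pointwise in
lemma spectrum_algebraMap_add_smul {A : Type*} [Ring A] [Algebra ℝ A] (a : A) (d : ℝ) {c : ℝ}
    (hc : c ≠ 0) :
    spectrum ℝ (algebraMap ℝ A d + c • a) = (fun x => d + c * x) '' spectrum ℝ a := by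
  rw [← spectrum.singleton_add_eq, show c • a = (Units.mk0 c hc) • a from rfl,
    spectrum.unit_smul_eq_smul, Set.singleton_add, Units.smul_mk0, ← Set.image_smul,
    Set.image_image]
  rfl

namespace Matrix

variable {𝕜 n : Type*} [RCLike 𝕜] [Fintype n] [DecidableEq n] {B C : Matrix n n 𝕜} {c d : ℝ}

namespace IsHermitian

lemma range_eigenvalues_of_eq_algebraMap_add_smul (hB : B.IsHermitian) (hC : C.IsHermitian)
    (hc : c ≠ 0) (h : C = algebraMap ℝ (Matrix n n 𝕜) d + c • B) :
    Set.range hC.eigenvalues = (fun x => d + c * x) '' Set.range hB.eigenvalues := by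
  rw [← hB.spectrum_real_eq_range_eigenvalues, ← hC.spectrum_real_eq_range_eigenvalues, h,
    spectrum_algebraMap_add_smul _ _ hc]

variable [Nonempty n]

lemma iSup_eigenvalues_of_eq_algebraMap_add_smul (hB : B.IsHermitian) (hC : C.IsHermitian)
    (hc : 0 < c) (h : C = algebraMap ℝ (Matrix n n 𝕜) d + c • B) :
    ⨆ i, hC.eigenvalues i = d + c * ⨆ i, hB.eigenvalues i := by
  have hmono : Monotone (fun x : ℝ => d + c * x) := fun x y hxy => by dsimp; gcongr
  rw [hmono.map_ciSup_of_continuousAt (by fun_prop) (Set.finite_range _).bddAbove, iSup, iSup,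
    range_eigenvalues_of_eq_algebraMap_add_smul hB hC hc.ne' h, ← Set.range_comp]
  rfl

lemma iInf_eigenvalues_of_eq_algebraMap_add_smul (hB : B.IsHermitian) (hC : C.IsHermitian)
    (hc : 0 < c) (h : C = algebraMap ℝ (Matrix n n 𝕜) d + c • B) :
    ⨅ i, hC.eigenvalues i = d + c * ⨅ i, hB.eigenvalues i := by
  have hmono : Monotone (fun x : ℝ => d + c * x) := fun x y hxy => by dsimp; gcongr
  rw [hmono.map_ciInf_of_continuousAt (by fun_prop) (Set.finite_range _).bddBelow, iInf, iInf,
    range_eigenvalues_of_eq_algebraMap_add_smul hB hC hc.ne' h, ← Set.range_comp]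
  rfl

end IsHermitian

lemma PosDef.iInf_eigenvalues_pos [Nonempty n] (hB : B.PosDef) :
    0 < ⨅ i, hB.isHermitian.eigenvalues i := by
  obtain ⟨i, hi⟩ := exists_eq_ciInf_of_finite (f := hB.isHermitian.eigenvalues)
  exact hi ▸ hB.eigenvalues_pos i

end Matrix

theorem cond_eLMMSE_ratio_identity_general {M N : ℕ} (hN : 0 < N)
    (A Sm : Matrix (Fin N) (Fin N) ℂ) (Ψ : Matrix (Fin M) (Fin N) ℂ)
    (ρ lmax lmin : ℝ) (hρ : 0 < ρ)
    (hA : A.PosDef)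
    (hmax : (⨆ i, hA.isHermitian.eigenvalues i) = lmax)
    (hmin : (⨅ i, hA.isHermitian.eigenvalues i) = lmin)
    (hΨ : Ψᴴ * Ψ = 1)
    (hS : ((Sm ^ 2)⁻¹).IsHermitian)
    (hSmax : (⨆ i, hS.eigenvalues i) = lmin⁻¹)
    (hSmin : (⨅ i, hS.eigenvalues i) = lmax⁻¹)
    (hΦ : (Ψᴴ * Ψ + ((ρ⁻¹ : ℝ) : ℂ) • (Sm ^ 2)⁻¹).IsHermitian)
    (hAr : (A + ((ρ⁻¹ : ℝ) : ℂ) • (1 : Matrix (Fin N) (Fin N) ℂ)).IsHermitian) :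
    condNum hΦ = condNum hA.isHermitian / condNum hAr ∧
      condNum hAr = (lmax + ρ⁻¹) / (lmin + ρ⁻¹) := by
  have : Nonempty (Fin N) := Fin.pos_iff_nonempty.mp hN
  have hlmin : 0 < lmin := hmin ▸ hA.iInf_eigenvalues_pos
  have hlmax : 0 < lmax := hlmin.trans_le <| hmin ▸ hmax ▸
    ciInf_le_ciSup (Set.finite_range _).bddBelow (Set.finite_range _).bddAbove
  have hΦ_eq : Ψᴴ * Ψ + ((ρ⁻¹ : ℝ) : ℂ) • (Sm ^ 2)⁻¹ =
      algebraMap ℝ (Matrix (Fin N) (Fin N) ℂ) 1 + ρ⁻¹ • (Sm ^ 2)⁻¹ := by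
    rw [hΨ, map_one, Complex.coe_smul]
  have hAr_eq : A + ((ρ⁻¹ : ℝ) : ℂ) • (1 : Matrix (Fin N) (Fin N) ℂ) =
      algebraMap ℝ (Matrix (Fin N) (Fin N) ℂ) ρ⁻¹ + (1 : ℝ) • A := by
    rw [Algebra.algebraMap_eq_smul_one, Complex.coe_smul, one_smul, add_comm]
  have hρ_inv : 0 < ρ⁻¹ := inv_pos.mpr hρ
  simp only [condNum,
    hS.iSup_eigenvalues_of_eq_algebraMap_add_smul hΦ hρ_inv hΦ_eq,
    hS.iInf_eigenvalues_of_eq_algebraMap_add_smul hΦ hρ_inv hΦ_eq,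
    hA.isHermitian.iSup_eigenvalues_of_eq_algebraMap_add_smul hAr one_pos hAr_eq,
    hA.isHermitian.iInf_eigenvalues_of_eq_algebraMap_add_smul hAr one_pos hAr_eq,
    hmax, hmin, hSmax, hSmin, one_mul]
  exact ⟨by field_simp; ring, by ring⟩

/-- Let `A_ZF` be Hermitian positive definite with extreme eigenvalues
`λmax`, `λmin`, let `ρ > 0`, and suppose `Ψᴴ Ψ = I` and `Σ⁻²` has extreme eigenvalues
`1/λmin` and `1/λmax`. Then `cond(Ψᴴ Ψ + ρ⁻¹ Σ⁻²) = cond(A_ZF) / cond(A_ZF + ρ⁻¹ I)`,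
where `cond(A_ZF + ρ⁻¹ I) = (λmax + ρ⁻¹)/(λmin + ρ⁻¹)`. -/
theorem cond_eLMMSE_ratio_identity {M N : ℕ} (hN : 0 < N)
    (A Sm : Matrix (Fin N) (Fin N) ℂ) (Ψ : Matrix (Fin M) (Fin N) ℂ)
    (ρ lmax lmin : ℝ) (hρ : 0 < ρ)
    (hA : A.PosDef)
    (hmax : (⨆ i, hA.isHermitian.eigenvalues i) = lmax)
    (hmin : (⨅ i, hA.isHermitian.eigenvalues i) = lmin)
    (hΨ : Ψᴴ * Ψ = 1)
    (hSdiag : Sm.IsDiag) (hSinv : IsUnit Sm.det)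
    (hS : ((Sm ^ 2)⁻¹).IsHermitian)
    (hSmax : (⨆ i, hS.eigenvalues i) = lmin⁻¹)
    (hSmin : (⨅ i, hS.eigenvalues i) = lmax⁻¹)
    (hΦ : (Ψᴴ * Ψ + ((ρ⁻¹ : ℝ) : ℂ) • (Sm ^ 2)⁻¹).IsHermitian)
    (hAr : (A + ((ρ⁻¹ : ℝ) : ℂ) • (1 : Matrix (Fin N) (Fin N) ℂ)).IsHermitian) :
    condNum hΦ = condNum hA.isHermitian / condNum hAr ∧
      condNum hAr = (lmax + ρ⁻¹) / (lmin + ρ⁻¹) :=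
  cond_eLMMSE_ratio_identity_general hN A Sm Ψ ρ lmax lmin hρ hA hmax hmin hΨ hS hSmax hSmin hΦ hAr
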